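/- Let n ≥ 1 and let ρ_0, ..., ρ_{n−1} : ℝ → ℝ be measurable weight functions such that z ↦ z^i ρ_j(z) is Lebesgue integrable on ℝ for all 0 ≤ i ≤ n−1 and 0 ≤ j ≤ n−1. Then det(∫_ℝ z^i ρ_j(z) dz)_{0≤i,j≤n−1} = ∫_ℝ ρ_{n−1}(z) · det(∫_ℝ u^i (z − u) ρ_j(u) du)_{0≤i,j≤n−2} dz, where for n = 1 the inner (empty) determinant is interpreted as 1. (This is the concrete form of the vertex-operator recursion τ_n = (∫ dz z^{n−1} ρ_{n−1}(z) X(t,z)) τ_{n−1}.) -/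
import Mathlib


open MeasureTheory

namespace VR

variable {n : ℕ}

def U (n : ℕ) (z : ℝ) : Matrix (Fin (n+1)) (Fin (n+1)) ℝ :=
  Matrix.of fun i j =>
    (if j = i then (if i = Fin.last n then 1 else z) else 0) +
    (if (j : ℕ) = (i : ℕ) + 1 then (-1 : ℝ) else 0)

def C (z : ℝ) (N : Matrix (Fin (n+1)) (Fin n) ℝ) : Matrix (Fin (n+1)) (Fin (n+1)) ℝ :=
  Matrix.of fun i j => (Fin.snoc (N i) (z ^ (i : ℕ)) : Fin (n+1) → ℝ) j

lemma det_U (z : ℝ) : (U n z).det = z ^ n := by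
  rw [Matrix.det_of_upperTriangular]
  · have h : ∀ i : Fin (n+1), (U n z) i i = if i = Fin.last n then 1 else z := by
      intro i
      have : (i : ℕ) ≠ (i : ℕ) + 1 := by omega
      simp [U, this]
    simp only [h]
    rw [Fin.prod_univ_castSucc]
    have : ∀ i : Fin n, (if i.castSucc = Fin.last n then (1:ℝ) else z) = z := by
      intro i
      simp [(Fin.castSucc_lt_last i).ne]
    simp [this]
  · intro i j hij
    have hij' : (j : ℕ) < (i : ℕ) := hij
    have h1 : j ≠ i := ne_of_lt hij
    have h2 : (j : ℕ) ≠ (i : ℕ) + 1 := by omega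
    simp [U, h1, h2]

lemma C_castSucc (z : ℝ) (N : Matrix (Fin (n+1)) (Fin n) ℝ) (i : Fin (n+1)) (j : Fin n) :
    C z N i j.castSucc = N i j := by
  simp [C]

lemma C_last (z : ℝ) (N : Matrix (Fin (n+1)) (Fin n) ℝ) (i : Fin (n+1)) :
    C z N i (Fin.last n) = z ^ (i : ℕ) := by
  simp [C]

lemma UC_last (z : ℝ) (N : Matrix (Fin (n+1)) (Fin n) ℝ) (j : Fin (n+1)) :
    (U n z * C z N) (Fin.last n) j = C z N (Fin.last n) j := by
  rw [Matrix.mul_apply]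
  have h : ∀ k : Fin (n+1), U n z (Fin.last n) k = if k = Fin.last n then 1 else 0 := by
    intro k
    have : (k : ℕ) ≠ n + 1 := by have := k.2; omega
    simp [U, this]
  simp [h, ite_mul]

lemma UC_castSucc (z : ℝ) (N : Matrix (Fin (n+1)) (Fin n) ℝ) (i : Fin n) (j : Fin (n+1)) :
    (U n z * C z N) i.castSucc j = z * C z N i.castSucc j - C z N i.succ j := by
  rw [Matrix.mul_apply]
  have h : ∀ k : Fin (n+1), U n z i.castSucc k =
      (if k = i.castSucc then z else 0) + (if k = i.succ then (-1:ℝ) else 0) := by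
    intro k
    have h1 : i.castSucc ≠ Fin.last n := (Fin.castSucc_lt_last i).ne
    have h2 : ((k : ℕ) = (i.castSucc : ℕ) + 1) ↔ k = i.succ := by
      rw [Fin.ext_iff]; simp
    simp only [U, Matrix.of_apply, h1, if_false, h2]
  simp [h, add_mul, ite_mul, Finset.sum_add_distrib]
  ring

lemma det_A_eq_det_C (z : ℝ) (hz : z ≠ 0) (N : Matrix (Fin (n+1)) (Fin n) ℝ) :
    Matrix.det (Matrix.of fun i j : Fin n => z * N i.castSucc j - N i.succ j)
      = (C z N).det := by
  have hdet : (U n z * C z N).det = z ^ n * (C z N).det := by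
    rw [Matrix.det_mul, det_U]
  rw [Matrix.det_succ_column (U n z * C z N) (Fin.last n)] at hdet
  rw [Finset.sum_eq_single (Fin.last n)] at hdet
  · rw [UC_last, C_last] at hdet
    simp only [Fin.val_last, Fin.succAbove_last] at hdet
    have hsub : ((U n z * C z N).submatrix Fin.castSucc Fin.castSucc)
        = Matrix.of fun i j : Fin n => z * N i.castSucc j - N i.succ j := by
      ext i j
      rw [Matrix.submatrix_apply, UC_castSucc, C_castSucc, C_castSucc, Matrix.of_apply]
    rw [hsub] at hdet
    have hpow : ((-1 : ℝ)) ^ (n + n) = 1 := by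
      exact Even.neg_one_pow (Even.add_self n)
    rw [hpow, one_mul] at hdet
    exact mul_left_cancel₀ (pow_ne_zero n hz) hdet
  · intro b _ hb
    rcases Fin.exists_castSucc_eq.mpr hb with ⟨b0, rfl⟩
    rw [UC_castSucc, C_last, C_last]
    simp [← pow_succ']
  · intro h
    exact absurd (Finset.mem_univ _) h

end VR


/-- vertex-operator recursion, concrete form: for measurable weights
`ρ 0, ..., ρ n` with integrable moments, the `(n+1) × (n+1)` moment determinant
`det (∫ z^i ρ j z dz)` equals
`∫ ρ n z · det (∫ u^i (z − u) ρ j u du)_{n × n} dz`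
(for `n = 0` the inner empty determinant is `1`).  Here the ambient size `n + 1`
plays the role of the `n ≥ 1` of the informal statement. -/
theorem moment_det_vertex_recursion
    (n : ℕ) (ρ : Fin (n + 1) → ℝ → ℝ)
    (hmeas : ∀ j, Measurable (ρ j))
    (hint : ∀ i j : Fin (n + 1), Integrable (fun z : ℝ => z ^ (i : ℕ) * ρ j z)) :
    Matrix.det (Matrix.of fun i j : Fin (n + 1) => ∫ z : ℝ, z ^ (i : ℕ) * ρ j z)
      = ∫ z : ℝ, ρ (Fin.last n) z *
          Matrix.det (Matrix.of fun i j : Fin n =>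
            ∫ u : ℝ, u ^ (i : ℕ) * ((z - u) * ρ j.castSucc u)) := by
  classical
  set M : Matrix (Fin (n+1)) (Fin (n+1)) ℝ :=
    Matrix.of fun i j => ∫ z : ℝ, z ^ (i : ℕ) * ρ j z with hM
  set N : Matrix (Fin (n+1)) (Fin n) ℝ := Matrix.of fun i j => M i j.castSucc with hN
  -- Step 1: compute the inner moment matrix
  have hinner : ∀ z : ℝ,
      (Matrix.of fun i j : Fin n => ∫ u : ℝ, u ^ (i : ℕ) * ((z - u) * ρ j.castSucc u))
        = Matrix.of fun i j : Fin n => z * N i.castSucc j - N i.succ j := by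
    intro z
    ext i j
    simp only [Matrix.of_apply, hN, hM]
    have key : ∀ u : ℝ, u ^ (i : ℕ) * ((z - u) * ρ j.castSucc u)
        = z * (u ^ (i : ℕ) * ρ j.castSucc u) - u ^ ((i : ℕ) + 1) * ρ j.castSucc u := by
      intro u; ring
    have h1 : Integrable (fun u : ℝ => z * (u ^ (i : ℕ) * ρ j.castSucc u)) := by
      exact (by simpa using hint i.castSucc j.castSucc : Integrable
        (fun u : ℝ => u ^ (i : ℕ) * ρ j.castSucc u)).const_mul z
    have h2 : Integrable (fun u : ℝ => u ^ ((i : ℕ) + 1) * ρ j.castSucc u) := by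
      simpa using hint i.succ j.castSucc
    simp only [key]
    rw [integral_sub h1 h2, integral_const_mul]
    simp [Fin.coe_castSucc, Fin.val_succ]
  -- the coefficient of z^i
  set c : Fin (n+1) → ℝ := fun i =>
    (-1 : ℝ) ^ ((i : ℕ) + n) * (M.submatrix i.succAbove Fin.castSucc).det with hc
  -- Step 2: pointwise identity away from 0
  have hpt : ∀ z : ℝ, z ≠ 0 →
      ρ (Fin.last n) z * Matrix.det (Matrix.of fun i j : Fin n =>
          ∫ u : ℝ, u ^ (i : ℕ) * ((z - u) * ρ j.castSucc u))
        = ∑ i : Fin (n+1), c i * (z ^ (i : ℕ) * ρ (Fin.last n) z) := by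
    intro z hz
    rw [hinner z, VR.det_A_eq_det_C z hz N,
      Matrix.det_succ_column (VR.C z N) (Fin.last n), Finset.mul_sum]
    refine Finset.sum_congr rfl fun i _ => ?_
    have hsub : (VR.C z N).submatrix i.succAbove (Fin.last n).succAbove
        = M.submatrix i.succAbove Fin.castSucc := by
      ext r s
      simp [Fin.succAbove_last, VR.C_castSucc, hN]
    rw [hsub, VR.C_last]
    simp only [hc, Fin.val_last]
    ring
  -- Step 3: a.e. identity and integration
  have h0 : ∀ᵐ z : ℝ, z ≠ (0 : ℝ) := by
    rw [ae_iff]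
    simp [not_not, Set.setOf_eq_eq_singleton] 
  have hInt : ∀ i : Fin (n+1),
      Integrable (fun z : ℝ => c i * (z ^ (i : ℕ) * ρ (Fin.last n) z)) := by
    intro i
    exact (hint i (Fin.last n)).const_mul (c i)
  calc M.det
      = ∑ i : Fin (n+1), c i * M i (Fin.last n) := by
        rw [Matrix.det_succ_column M (Fin.last n)]
        refine Finset.sum_congr rfl fun i _ => ?_
        simp only [hc, Fin.val_last, Fin.succAbove_last]
        ring
    _ = ∑ i : Fin (n+1), ∫ z : ℝ, c i * (z ^ (i : ℕ) * ρ (Fin.last n) z) := by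
        refine Finset.sum_congr rfl fun i _ => ?_
        rw [integral_const_mul]
        rfl
    _ = ∫ z : ℝ, ∑ i : Fin (n+1), c i * (z ^ (i : ℕ) * ρ (Fin.last n) z) := by
        rw [integral_finset_sum _ fun i _ => hInt i]
    _ = ∫ z : ℝ, ρ (Fin.last n) z * Matrix.det (Matrix.of fun i j : Fin n =>
            ∫ u : ℝ, u ^ (i : ℕ) * ((z - u) * ρ j.castSucc u)) := by
        refine integral_congr_ae ?_
        filter_upwards [h0] with z hz
        rw [hpt z hz]
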